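/- The group with presentation on four generators a₁, b₁, a₂, b₂ with relators b₁b₂, b₂a₂b₂⁻¹a₁, a₁b₂, and all six pairwise commutators [a₁,b₁], [a₁,a₂], [a₁,b₂], [b₁,a₂], [b₁,b₂], [a₂,b₂] is infinite cyclic. -/
import Mathlib


/-!
The group presented on a₁, b₁, a₂, b₂ with relators b₁b₂, b₂a₂b₂⁻¹a₁, a₁b₂ and all
six pairwise commutators is infinite cyclic (isomorphic to ℤ).
Generators: a₁ = 0, b₁ = 1, a₂ = 2, b₂ = 3.
-/

namespace Stmt12

def a₁ : FreeGroup (Fin 4) := FreeGroup.of 0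
def b₁ : FreeGroup (Fin 4) := FreeGroup.of 1
def a₂ : FreeGroup (Fin 4) := FreeGroup.of 2
def b₂ : FreeGroup (Fin 4) := FreeGroup.of 3

def rels : Set (FreeGroup (Fin 4)) :=
  { b₁ * b₂,
    b₂ * a₂ * b₂⁻¹ * a₁,
    a₁ * b₂,
    a₁ * b₁ * a₁⁻¹ * b₁⁻¹,
    a₁ * a₂ * a₁⁻¹ * a₂⁻¹,
    a₁ * b₂ * a₁⁻¹ * b₂⁻¹,
    b₁ * a₂ * b₁⁻¹ * a₂⁻¹,
    b₁ * b₂ * b₁⁻¹ * b₂⁻¹,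
    a₂ * b₂ * a₂⁻¹ * b₂⁻¹ }

def f : Fin 4 → Multiplicative ℤ :=
  ![Multiplicative.ofAdd (-1), Multiplicative.ofAdd (-1),
    Multiplicative.ofAdd 1, Multiplicative.ofAdd 1]

lemma hf : ∀ r ∈ rels, FreeGroup.lift f r = 1 := by
  intro r hr
  simp only [rels, Set.mem_insert_iff, Set.mem_singleton_iff] at hr
  rcases hr with rfl|rfl|rfl|rfl|rfl|rfl|rfl|rfl|rfl <;>
    simp [a₁, b₁, a₂, b₂, f, ← ofAdd_add, ← ofAdd_neg]

lemma rel_one {r : FreeGroup (Fin 4)} (hr : r ∈ rels) : PresentedGroup.mk rels r = 1 := by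
  exact (QuotientGroup.eq_one_iff r).mpr (Subgroup.subset_normalClosure hr)

lemma rel0 : (PresentedGroup.of 0 : PresentedGroup rels) = (PresentedGroup.of 3)⁻¹ := by
  have h := rel_one (show a₁ * b₂ ∈ rels by simp [rels])
  simp only [a₁, b₂, map_mul] at h
  exact eq_inv_of_mul_eq_one_left h

lemma rel1 : (PresentedGroup.of 1 : PresentedGroup rels) = (PresentedGroup.of 3)⁻¹ := by
  have h := rel_one (show b₁ * b₂ ∈ rels by simp [rels])
  simp only [b₁, b₂, map_mul] at h
  exact eq_inv_of_mul_eq_one_left h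

lemma rel2 : (PresentedGroup.of 2 : PresentedGroup rels) = (PresentedGroup.of 3 : PresentedGroup rels) := by
  have h := rel_one (show b₂ * a₂ * b₂⁻¹ * a₁ ∈ rels by simp [rels])
  have h0 : (PresentedGroup.of 0 : PresentedGroup rels) = (PresentedGroup.of 3)⁻¹ := rel0
  simp only [a₁, a₂, b₂, map_mul, map_inv] at h
  show PresentedGroup.mk rels (FreeGroup.of 2) = PresentedGroup.mk rels (FreeGroup.of 3)
  set x2 := PresentedGroup.mk rels (FreeGroup.of 2) with hx2
  set x3 := PresentedGroup.mk rels (FreeGroup.of 3) with hx3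
  have h0' : PresentedGroup.mk rels (FreeGroup.of 0) = x3⁻¹ := h0
  rw [h0'] at h
  have h3 : x3 * x2 * x3⁻¹ = x3 := by
    have := mul_inv_eq_one.mp h
    simpa using this
  calc x2 = x3⁻¹ * (x3 * x2 * x3⁻¹) * x3 := by group
  _ = x3⁻¹ * x3 * x3 := by rw [h3]
  _ = x3 := by group

theorem pi1_Z_psi :
    Nonempty (PresentedGroup rels ≃* Multiplicative ℤ) := by
  refine ⟨MonoidHom.toMulEquiv (PresentedGroup.toGroup hf)
    (zpowersHom _ (PresentedGroup.of 3)) ?_ ?_⟩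
  · ext x
    fin_cases x <;>
      simp [f, rel0, rel1, rel2]
  · ext
    simp [f]

end Stmt12
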